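/- Let G be any group and let ρ: F → G be a group homomorphism with ρ(R) = 1. Then in the free ℤ-module on G (i.e. ℤ[G]), ∑_{i=1}^{2g} ∑_{τ=0,1} (−1)^τ ( [ρ(x_i)] − [ρ(γ^τ_i x_i)] + [ρ(γ^τ_i)] ) = 0, where [h] denotes the basis element of ℤ[G] corresponding to h ∈ G. (This expresses that the chain c = ∑_{i=1}^{2g} (∂R/∂x_i) ⊗ x_i is a 2-cycle in the inhomogeneous bar complex of the surface group Π with trivial ℤ coefficients; this cycle represents the fundamental class generating H₂(Π).) -/

import Mathlib

open scoped commutatorElement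

/-- The list of commutators `[x_{2j-1}, x_{2j}]`, `j = 1, …, g`, in the free group on
`2g` generators. -/
def commList (g : ℕ) : List (FreeGroup (Fin (2 * g))) :=
  List.ofFn (fun l : Fin g =>
    ⁅FreeGroup.of (⟨2 * l.1, by have := l.2; omega⟩ : Fin (2 * g)),
     FreeGroup.of (⟨2 * l.1 + 1, by have := l.2; omega⟩ : Fin (2 * g))⁆)

/-- The partial product `∏_{l=1}^{m} [x_{2l-1}, x_{2l}]`. -/
def prodComm (g m : ℕ) : FreeGroup (Fin (2 * g)) := ((commList g).take m).prod

/-- The surface relation `R = ∏_{l=1}^{g} [x_{2l-1}, x_{2l}]`. -/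
def surfaceRel (g : ℕ) : FreeGroup (Fin (2 * g)) := (commList g).prod

/-- `γ⁰_i` for `i = k.1 + 1 ∈ {1, …, 2g}`. -/
def gam0 (g : ℕ) (k : Fin (2 * g)) : FreeGroup (Fin (2 * g)) :=
  if k.1 % 2 = 0 then prodComm g (k.1 / 2)
  else prodComm g (k.1 / 2) *
    FreeGroup.of ⟨2 * (k.1 / 2), by have := k.2; omega⟩

/-- `γ¹_i` for `i = k.1 + 1 ∈ {1, …, 2g}`. -/
def gam1 (g : ℕ) (k : Fin (2 * g)) : FreeGroup (Fin (2 * g)) :=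
  if k.1 % 2 = 0 then
    prodComm g (k.1 / 2) *
      FreeGroup.of ⟨2 * (k.1 / 2), by have := k.2; omega⟩ *
      FreeGroup.of ⟨2 * (k.1 / 2) + 1, by have := k.2; omega⟩ *
      (FreeGroup.of (⟨2 * (k.1 / 2), by have := k.2; omega⟩ : Fin (2 * g)))⁻¹
  else
    prodComm g (k.1 / 2) *
      ⁅FreeGroup.of (⟨2 * (k.1 / 2), by have := k.2; omega⟩ : Fin (2 * g)),
       FreeGroup.of (⟨2 * (k.1 / 2) + 1, by have := k.2; omega⟩ : Fin (2 * g))⁆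

/-- `γ^τ_i`, `τ = 0, 1`. -/
def gam (g : ℕ) (τ : Fin 2) (k : Fin (2 * g)) : FreeGroup (Fin (2 * g)) :=
  if τ = 0 then gam0 g k else gam1 g k

/-! The boundary of the bar chain `[a|b]` is `[b] - [ab] + [a]`. Writing `P_l` for the partial
product of the first `l` commutators, the four bar chains attached to the generators of the
`l`-th handle have total boundary `[P_l] - [P_l [x_{2l-1}, x_{2l}]] = [P_l] - [P_{l+1}]`, so the
whole boundary telescopes to `[1] - [ρ R]`, which vanishes because `ρ R = 1`. -/

theorem Fin.sum_univ_two_mul {M : Type*} [AddCommMonoid M] {n : ℕ} (f : Fin (2 * n) → M) :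
    ∑ i, f i = ∑ l : Fin n, (f ⟨2 * l, by omega⟩ + f ⟨2 * l + 1, by omega⟩) := by
  rw [← (finProdFinEquiv.trans (finCongr (mul_comm n 2))).sum_comp, Fintype.sum_prod_type]
  refine Finset.sum_congr rfl fun l _ => ?_
  rw [Fin.sum_univ_two]
  congr 2 <;> ext <;> simp [finProdFinEquiv]; omega

section BarComplex

variable {G : Type*} [Group G]

noncomputable def barBoundary (a b : G) : G →₀ ℤ :=
  Finsupp.single b 1 - Finsupp.single (a * b) 1 + Finsupp.single a 1

theorem barBoundary_commutator_pair (p a b : G) :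
    barBoundary p a - barBoundary (p * a * b * a⁻¹) a
      + (barBoundary (p * a) b - barBoundary (p * ⁅a, b⁆) b)
      = Finsupp.single p 1 - Finsupp.single (p * ⁅a, b⁆) 1 := by
  simp only [barBoundary, commutatorElement_def, mul_assoc, inv_mul_cancel, mul_one]
  abel

end BarComplex

section SurfaceGroup

variable {g : ℕ}

@[simp] theorem prodComm_zero (g : ℕ) : prodComm g 0 = 1 := rfl

theorem prodComm_succ {l : ℕ} (hl : l < g) :
    prodComm g (l + 1) = prodComm g l *
      ⁅FreeGroup.of (⟨2 * l, by omega⟩ : Fin (2 * g)),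
       FreeGroup.of (⟨2 * l + 1, by omega⟩ : Fin (2 * g))⁆ := by
  rw [prodComm, List.prod_take_succ _ _ (by simpa [commList] using hl)]
  congr 1
  simp [commList]

theorem prodComm_self (g : ℕ) : prodComm g g = surfaceRel g := by
  rw [prodComm, surfaceRel, List.take_of_length_le (by simp [commList])]

variable (l : Fin g)

theorem gam_zero_even : gam g 0 ⟨2 * l, by omega⟩ = prodComm g l := by
  simp [gam, gam0]

theorem gam_one_even : gam g 1 ⟨2 * l, by omega⟩ =
    prodComm g l * FreeGroup.of ⟨2 * l, by omega⟩ * FreeGroup.of ⟨2 * l + 1, by omega⟩ *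
      (FreeGroup.of (⟨2 * l, by omega⟩ : Fin (2 * g)))⁻¹ := by
  simp [gam, gam1]

theorem gam_zero_odd :
    gam g 0 ⟨2 * l + 1, by omega⟩ = prodComm g l * FreeGroup.of ⟨2 * l, by omega⟩ := by
  have : (2 * l.1 + 1) / 2 = l := by omega
  simp [gam, gam0, this]

theorem gam_one_odd : gam g 1 ⟨2 * l + 1, by omega⟩ = prodComm g l *
    ⁅FreeGroup.of (⟨2 * l, by omega⟩ : Fin (2 * g)),
     FreeGroup.of (⟨2 * l + 1, by omega⟩ : Fin (2 * g))⁆ := by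
  have : (2 * l.1 + 1) / 2 = l := by omega
  simp [gam, gam1, this]

variable {G : Type*} [Group G] (ρ : FreeGroup (Fin (2 * g)) →* G)

/-- The boundary of the term `(∂R/∂x_i) ⊗ x_i` of the fundamental cycle, where the Fox
derivative is `∂R/∂x_i = γ⁰_i - γ¹_i`. -/
noncomputable def foxTermBoundary (i : Fin (2 * g)) : G →₀ ℤ :=
  ∑ τ : Fin 2, ((-1 : ℤ) ^ (τ : ℕ)) • barBoundary (ρ (gam g τ i)) (ρ (FreeGroup.of i))

theorem foxTermBoundary_even_add_odd :
    foxTermBoundary ρ ⟨2 * l, by omega⟩ + foxTermBoundary ρ ⟨2 * l + 1, by omega⟩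
      = Finsupp.single (ρ (prodComm g l)) 1 - Finsupp.single (ρ (prodComm g (l + 1))) 1 := by
  simp only [foxTermBoundary, Fin.sum_univ_two, Fin.val_zero, Fin.val_one, pow_zero, pow_one,
    one_smul, neg_one_smul, ← sub_eq_add_neg, gam_zero_even, gam_one_even, gam_zero_odd,
    gam_one_odd, prodComm_succ l.2, map_mul, map_inv, map_commutatorElement]
  exact barBoundary_commutator_pair (ρ (prodComm g l)) (ρ (.of ⟨2 * l, by omega⟩))
    (ρ (.of ⟨2 * l + 1, by omega⟩))

end SurfaceGroup

theorem stmt11_general (g : ℕ) (G : Type*) [Group G]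
    (ρ : FreeGroup (Fin (2 * g)) →* G) (hρ : ρ (surfaceRel g) = 1) :
    ∑ i : Fin (2 * g), ∑ τ : Fin 2, ((-1 : ℤ) ^ (τ : ℕ)) •
      (Finsupp.single (ρ (FreeGroup.of i)) (1 : ℤ)
        - Finsupp.single (ρ (gam g τ i * FreeGroup.of i)) (1 : ℤ)
        + Finsupp.single (ρ (gam g τ i)) (1 : ℤ)) = (0 : G →₀ ℤ) := by
  have hterm : ∀ (i : Fin (2 * g)) τ, Finsupp.single (ρ (FreeGroup.of i)) (1 : ℤ)
      - Finsupp.single (ρ (gam g τ i * FreeGroup.of i)) 1 + Finsupp.single (ρ (gam g τ i)) 1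
      = barBoundary (ρ (gam g τ i)) (ρ (FreeGroup.of i)) := fun i τ => by
    rw [barBoundary, map_mul]
  simp only [hterm]
  change ∑ i, foxTermBoundary ρ i = 0
  rw [Fin.sum_univ_two_mul]
  simp only [foxTermBoundary_even_add_odd]
  rw [Fin.sum_univ_eq_sum_range (fun l => Finsupp.single (ρ (prodComm g l)) (1 : ℤ)
      - Finsupp.single (ρ (prodComm g (l + 1))) 1), Finset.sum_range_sub', prodComm_self, hρ,
    prodComm_zero, map_one, sub_self]

/-- If `ρ : F → G` kills the surface relation `R`, then in the free `ℤ`-module `ℤ[G]`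
the boundary of the fundamental 2-cycle vanishes:
`∑_{i=1}^{2g} ∑_{τ=0,1} (−1)^τ ([ρ(x_i)] − [ρ(γ^τ_i x_i)] + [ρ(γ^τ_i)]) = 0`. -/
theorem stmt11 (g : ℕ) (hg : 1 ≤ g) (G : Type*) [Group G]
    (ρ : FreeGroup (Fin (2 * g)) →* G) (hρ : ρ (surfaceRel g) = 1) :
    ∑ i : Fin (2 * g), ∑ τ : Fin 2, ((-1 : ℤ) ^ (τ : ℕ)) •
      (Finsupp.single (ρ (FreeGroup.of i)) (1 : ℤ)
        - Finsupp.single (ρ (gam g τ i * FreeGroup.of i)) (1 : ℤ)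
        + Finsupp.single (ρ (gam g τ i)) (1 : ℤ)) = (0 : G →₀ ℤ) :=
  stmt11_general g G ρ hρ
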